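/- Let A be an n×n complex matrix of index k and let m ≥ 1 be an integer. Then A^{#_m} = 0 if and only if A^k = 0. -/

import Mathlib

/-!
Write `X = A⊕`. Right multiplication by `A^m` absorbs the projector `A^m (A^m)†`, so
`A^{#_m} = 0` gives `X^{m+1} A^{2m} = 0`. Since `R(A^{k+i}) = R(A^k) = R(X)` and `XA` is the
identity on `R(X)`, each factor `X` cancels one `A` on these ranges: `X^{m+1} A^{k+2m+1} = A^{k+m}`.
Hence `A^{k+m} = 0`, and `A^k = 0` because it has the same range. Conversely `A^k = 0` forces
`R(X) = 0`.
-/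

open Matrix

/-- `X` is the Moore–Penrose inverse of `A` (four Penrose equations). -/
def MoorePenroseOf {n : ℕ} (A X : Matrix (Fin n) (Fin n) ℂ) : Prop :=
  A * X * A = A ∧ X * A * X = X ∧ (A * X)ᴴ = A * X ∧ (X * A)ᴴ = X * A

/-- Column space of a square complex matrix. -/
noncomputable def colSpace {n : ℕ} (A : Matrix (Fin n) (Fin n) ℂ) : Submodule ℂ (Fin n → ℂ) :=
  LinearMap.range A.mulVecLin

/-- Null space of a square complex matrix. -/
noncomputable def nullSpace {n : ℕ} (A : Matrix (Fin n) (Fin n) ℂ) : Submodule ℂ (Fin n → ℂ) :=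
  LinearMap.ker A.mulVecLin

/-- `k` is the index of `A`: the smallest nonnegative integer with
`rank(A^k) = rank(A^(k+1))`. -/
def HasIndex {n : ℕ} (A : Matrix (Fin n) (Fin n) ℂ) (k : ℕ) : Prop :=
  (A ^ k).rank = (A ^ (k + 1)).rank ∧ ∀ j < k, (A ^ j).rank ≠ (A ^ (j + 1)).rank

/-- `X` is the core-EP inverse of `A` (where `k = Ind(A)`): `XAX = X` and
`R(X) = R(Xᴴ) = R(A^k)`. -/
def IsCoreEP {n : ℕ} (A X : Matrix (Fin n) (Fin n) ℂ) (k : ℕ) : Prop :=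
  X * A * X = X ∧ colSpace X = colSpace (A ^ k) ∧ colSpace Xᴴ = colSpace (A ^ k)

lemma colSpace_mul_le {n : ℕ} (A B : Matrix (Fin n) (Fin n) ℂ) :
    colSpace (A * B) ≤ colSpace A := by
  rw [colSpace, colSpace, Matrix.mulVecLin_mul, LinearMap.range_comp]
  exact LinearMap.map_le_range

lemma colSpace_mul {n : ℕ} (A B : Matrix (Fin n) (Fin n) ℂ) :
    colSpace (A * B) = (colSpace B).map A.mulVecLin := by
  rw [colSpace, colSpace, Matrix.mulVecLin_mul, LinearMap.range_comp]

lemma colSpace_eq_bot_iff {n : ℕ} {A : Matrix (Fin n) (Fin n) ℂ} :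
    colSpace A = ⊥ ↔ A = 0 := by
  rw [colSpace, LinearMap.range_eq_bot, ← Matrix.toLin'_apply', LinearEquiv.map_eq_zero_iff]

lemma eq_zero_iff_of_colSpace_eq {n : ℕ} {A B : Matrix (Fin n) (Fin n) ℂ}
    (h : colSpace A = colSpace B) : A = 0 ↔ B = 0 := by
  rw [← colSpace_eq_bot_iff, h, colSpace_eq_bot_iff]

lemma colSpace_pow_add_of_rank_eq {n k : ℕ} {A : Matrix (Fin n) (Fin n) ℂ}
    (h : (A ^ k).rank = (A ^ (k + 1)).rank) (j : ℕ) :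
    colSpace (A ^ (k + j)) = colSpace (A ^ k) := by
  have hsucc : colSpace (A ^ (k + 1)) = colSpace (A ^ k) :=
    Submodule.eq_of_le_of_finrank_le (pow_succ A k ▸ colSpace_mul_le _ _) h.le
  induction j with
  | zero => rfl
  | succ j ih => rw [← add_assoc, pow_succ', colSpace_mul, ih, ← colSpace_mul, ← pow_succ', hsucc]

lemma mul_mul_eq_of_colSpace_le {n : ℕ} {X A M : Matrix (Fin n) (Fin n) ℂ}
    (hX : X * A * X = X) (hM : colSpace M ≤ colSpace X) : X * A * M = M := by
  refine Matrix.toLin'.injective (LinearMap.ext fun v => ?_)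
  obtain ⟨u, hu⟩ := hM ⟨v, rfl⟩
  simp only [Matrix.toLin'_apply, Matrix.mulVecLin_apply] at hu ⊢
  rw [← Matrix.mulVec_mulVec, ← hu, Matrix.mulVec_mulVec, hX]

lemma pow_mul_pow_add_eq {n k : ℕ} {A X : Matrix (Fin n) (Fin n) ℂ}
    (hX : X * A * X = X) (hR : colSpace X = colSpace (A ^ k))
    (hrank : (A ^ k).rank = (A ^ (k + 1)).rank) (l j : ℕ) :
    X ^ j * A ^ (k + l + j) = A ^ (k + l) := by
  induction j with
  | zero => simp
  | succ j ih =>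
    have hfix : X * A * A ^ (k + l + j) = A ^ (k + l + j) := by
      refine mul_mul_eq_of_colSpace_le hX ?_
      rw [hR, add_assoc, colSpace_pow_add_of_rank_eq hrank]
    calc X ^ (j + 1) * A ^ (k + l + (j + 1))
        = X ^ j * (X * A * A ^ (k + l + j)) := by
          rw [← add_assoc, pow_succ, pow_succ']
          simp only [mul_assoc]
      _ = A ^ (k + l) := by rw [hfix, ih]

theorem stmt_18_general {n k m : ℕ}
    (A CEP AmDag : Matrix (Fin n) (Fin n) ℂ)
    (hInd : HasIndex A k)
    (hCEP : IsCoreEP A CEP k)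
    (hMP : MoorePenroseOf (A ^ m) AmDag) :
    CEP ^ (m + 1) * A ^ m * (A ^ m * AmDag) = 0 ↔ A ^ k = 0 := by
  obtain ⟨hXAX, hR, -⟩ := hCEP
  constructor
  · intro h
    have hkill : CEP ^ (m + 1) * A ^ (2 * m) = 0 :=
      calc CEP ^ (m + 1) * A ^ (2 * m)
          = CEP ^ (m + 1) * A ^ m * (A ^ m * AmDag) * A ^ m := by
            rw [mul_assoc (CEP ^ (m + 1) * A ^ m), hMP.1, mul_assoc, ← pow_add, two_mul]
        _ = 0 := by rw [h, zero_mul]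
    have hzero : A ^ (k + m) = 0 := by
      rw [← pow_mul_pow_add_eq hXAX hR hInd.1 m (m + 1),
        show k + m + (m + 1) = 2 * m + (k + 1) by ring, pow_add A, ← mul_assoc, hkill, zero_mul]
    rwa [eq_zero_iff_of_colSpace_eq (colSpace_pow_add_of_rank_eq hInd.1 m)] at hzero
  · intro hAk
    rw [← eq_zero_iff_of_colSpace_eq hR] at hAk
    rw [hAk, zero_pow m.succ_ne_zero, zero_mul, zero_mul]

/-- `A^{#_m} = 0` iff `A^k = 0`. -/
theorem stmt_18 {n k m : ℕ} (hm : 1 ≤ m)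
    (A CEP AmDag : Matrix (Fin n) (Fin n) ℂ)
    (hInd : HasIndex A k)
    (hCEP : IsCoreEP A CEP k)
    (hMP : MoorePenroseOf (A ^ m) AmDag) :
    CEP ^ (m + 1) * A ^ m * (A ^ m * AmDag) = 0 ↔ A ^ k = 0 :=
  stmt_18_general A CEP AmDag hInd hCEP hMP
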